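/- arXiv:2509.05687 — 3 statements merged into one kernel-verified Lean document; each statement's English description precedes it below -/
import Mathlib

section
/- For every τ > 1, the s-dimensional Hausdorff measure of W(τ) is zero whenever s > 2/(τ+1). Consequently the Hausdorff dimension of W(τ) is at most 2/(τ+1). -/
open MeasureTheory

/-- Distance from `y` to the nearest integer. -/
noncomputable def distNearestInt (y : ℝ) : ℝ := |y - round y|

/-- The set of `τ`-well approximable numbers in `[0,1)`. -/
def W (τ : ℝ) : Set ℝ :=
  {x : ℝ | x ∈ Set.Ico (0 : ℝ) 1 ∧
    {q : ℕ | distNearestInt ((q : ℝ) * x) < (q : ℝ) ^ (-τ)}.Infinite}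

/-!
If `‖q x‖ < q^(-τ)` then `x` lies within `q^(-(τ+1))` of one of the `q + 1` fractions `p / q`,
`0 ≤ p ≤ q`. So `W(τ)` is contained in the set of points lying in infinitely many of these balls,
and the `s`-th powers of their diameters sum to `∑ (q + 1) (2 q^(-(τ+1)))^s`, which is finite
exactly when `(τ + 1) s > 2`. The Hausdorff–Cantelli lemma (covering by the tails of a family of
sets whose `s`-diameters are summable) then gives `H^s(W(τ)) = 0`.
-/

open Filter Metric Topology
open scoped ENNReal

theorem hausdorffMeasure_setOf_infinite_mem_eq_zero {ι X : Type*} [Countable ι] [EMetricSpace X]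
    [MeasurableSpace X] [BorelSpace X] {d : ℝ} (hd : 0 < d) {B : ι → Set X}
    (hB : ∑' i, ediam (B i) ^ d ≠ ∞) : μH[d] {x | {i | x ∈ B i}.Infinite} = 0 := by
  set tail : Finset ι → ℝ≥0∞ := fun F => ∑' i : {i // i ∉ F}, ediam (B i) ^ d
  have htail : Tendsto tail atTop (𝓝 0) := ENNReal.tendsto_tsum_compl_atTop_zero hB
  have hr : Tendsto (fun F => tail F ^ d⁻¹) atTop (𝓝 0) :=
    (ENNReal.continuous_rpow_const.tendsto' 0 0 (ENNReal.zero_rpow_of_pos (inv_pos.2 hd))).comp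
      htail
  have hdiam : ∀ F : Finset ι, ∀ i : {i // i ∉ F}, ediam (B i) ≤ tail F ^ d⁻¹ := fun F i =>
    calc ediam (B i) = (ediam (B i) ^ d) ^ d⁻¹ := by
          rw [← ENNReal.rpow_mul, mul_inv_cancel₀ hd.ne', ENNReal.rpow_one]
      _ ≤ tail F ^ d⁻¹ :=
          ENNReal.rpow_le_rpow (ENNReal.le_tsum (f := fun i : {i // i ∉ F} => ediam (B i) ^ d) i)
            (inv_pos.2 hd).le
  have hcover : ∀ F : Finset ι, {x | {i | x ∈ B i}.Infinite} ⊆ ⋃ i : {i // i ∉ F}, B i := by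
    intro F x hx
    obtain ⟨i, hxi, hiF⟩ := hx.exists_notMem_finset F
    exact Set.mem_iUnion.2 ⟨⟨i, hiF⟩, hxi⟩
  have := Measure.hausdorffMeasure_le_liminf_tsum d _ _ hr (fun F (i : {i // i ∉ F}) => B i)
    (.of_forall hdiam) (.of_forall hcover)
  exact le_zero_iff.1 (this.trans_eq htail.liminf_eq)

lemma exists_fin_dist_div_eq_distNearestInt {x : ℝ} (hx : x ∈ Set.Icc (0 : ℝ) 1) {q : ℕ}
    (hq : 0 < q) : ∃ p : Fin (q + 1), dist x ((p : ℕ) / q) = distNearestInt (q * x) / q := by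
  have hq' : (0 : ℝ) < q := Nat.cast_pos.2 hq
  set n := round ((q : ℝ) * x)
  have hn_lower : ((-1 : ℤ) : ℝ) < n := by
    push_cast
    linarith [sub_half_lt_round ((q : ℝ) * x), mul_nonneg hq'.le hx.1]
  have hn_upper : (n : ℝ) < ((q + 1 : ℤ) : ℝ) := by
    push_cast
    linarith [round_le_add_half ((q : ℝ) * x), mul_le_of_le_one_right hq'.le hx.2]
  have hn0 : 0 ≤ n := Int.lt_iff_add_one_le.1 (Int.cast_lt.1 hn_lower)
  have hnq : n ≤ q := Int.lt_add_one_iff.1 (Int.cast_lt.1 hn_upper)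
  refine ⟨⟨n.toNat, by omega⟩, ?_⟩
  have hn : ((n.toNat : ℕ) : ℝ) = n := by exact_mod_cast Int.toNat_of_nonneg hn0
  rw [Real.dist_eq, distNearestInt, hn, ← abs_of_pos hq', ← abs_div, abs_of_pos hq', sub_div,
    mul_div_cancel_left₀ _ hq'.ne']

def approxBall (τ : ℝ) (i : Σ q : ℕ, Fin (q + 1)) : Set ℝ :=
  closedBall (((i.2 : ℕ) : ℝ) / i.1) ((i.1 : ℝ) ^ (-(τ + 1)))

lemma W_subset_setOf_infinite_mem_approxBall (τ : ℝ) :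
    W τ ⊆ {x | {i | x ∈ approxBall τ i}.Infinite} := by
  rintro x ⟨hx, hinf⟩
  refine Set.Infinite.of_image Sigma.fst ((hinf.sdiff (Set.finite_singleton 0)).mono ?_)
  rintro q ⟨hqx, hq0 : q ≠ 0⟩
  have hq : 0 < q := Nat.pos_of_ne_zero hq0
  obtain ⟨p, hp⟩ := exists_fin_dist_div_eq_distNearestInt (Set.Ico_subset_Icc_self hx) hq
  refine ⟨⟨q, p⟩, show x ∈ approxBall τ ⟨q, p⟩ from ?_, rfl⟩
  rw [approxBall, mem_closedBall, hp, neg_add', Real.rpow_sub_one (Nat.cast_ne_zero.2 hq0)]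
  exact div_le_div_of_nonneg_right hqx.le q.cast_nonneg

lemma ediam_approxBall (τ : ℝ) (i : Σ q : ℕ, Fin (q + 1)) :
    ediam (approxBall τ i) = ENNReal.ofReal (2 * (i.1 : ℝ) ^ (-(τ + 1))) := by
  rw [approxBall, Real.closedBall_eq_Icc, Real.ediam_Icc]
  ring_nf

lemma summable_natCast_add_one_mul_rpow_neg {b : ℝ} (hb : 2 < b) :
    Summable fun q : ℕ => ((q : ℝ) + 1) * (q : ℝ) ^ (-b) := by
  have h : ∀ q : ℕ, ((q : ℝ) + 1) * (q : ℝ) ^ (-b) = (q : ℝ) ^ (1 - b) + (q : ℝ) ^ (-b) := by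
    intro q
    rw [add_mul, one_mul, sub_eq_add_neg, Real.rpow_add' q.cast_nonneg (by linarith),
      Real.rpow_one]
  simp_rw [h]
  exact (Real.summable_nat_rpow.2 (by linarith)).add (Real.summable_nat_rpow.2 (by linarith))

lemma tsum_ediam_approxBall_rpow_ne_top {τ s : ℝ} (hs : 0 < s) (hτs : 2 < (τ + 1) * s) :
    ∑' i, ediam (approxBall τ i) ^ s ≠ ∞ := by
  have hterm : ∀ q : ℕ, ∑' p : Fin (q + 1), ediam (approxBall τ ⟨q, p⟩) ^ s =
      ENNReal.ofReal (2 ^ s * (((q : ℝ) + 1) * (q : ℝ) ^ (-((τ + 1) * s)))) := by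
    intro q
    simp_rw [ediam_approxBall, tsum_fintype, Finset.sum_const, Finset.card_univ, Fintype.card_fin,
      nsmul_eq_mul]
    rw [ENNReal.ofReal_rpow_of_nonneg (by positivity) hs.le, Real.mul_rpow zero_le_two
      (by positivity), ← Real.rpow_mul q.cast_nonneg, ← ENNReal.ofReal_natCast,
      ← ENNReal.ofReal_mul (by positivity)]
    congr 1
    rw [neg_mul]
    push_cast
    ring
  rw [ENNReal.tsum_sigma', tsum_congr hterm]
  exact ((summable_natCast_add_one_mul_rpow_neg hτs).mul_left _).tsum_ofReal_ne_top

theorem hausdorffMeasure_W_eq_zero {τ s : ℝ} (hτ : 0 < τ + 1) (hs : 2 / (τ + 1) < s) :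
    μH[s] (W τ) = 0 := by
  have hs0 : 0 < s := (div_pos two_pos hτ).trans hs
  have hτs : 2 < (τ + 1) * s := by rwa [div_lt_iff₀' hτ] at hs
  exact measure_mono_null (W_subset_setOf_infinite_mem_approxBall τ)
    (hausdorffMeasure_setOf_infinite_mem_eq_zero hs0 (tsum_ediam_approxBall_rpow_ne_top hs0 hτs))

/-- Upper bound in the Jarník–Besicovitch theorem: for `τ > 1` and `s > 2/(τ+1)`,
`H^s(W(τ)) = 0`, and hence `dimH W(τ) ≤ 2/(τ+1)`. -/
theorem JB_upper (τ : ℝ) (hτ : 1 < τ) :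
    (∀ s : ℝ, 2 / (τ + 1) < s → μH[s] (W τ) = 0) ∧
      dimH (W τ) ≤ ENNReal.ofReal (2 / (τ + 1)) := by
  have hτ' : 0 < τ + 1 := by linarith
  have hnull : ∀ s : ℝ, 2 / (τ + 1) < s → μH[s] (W τ) = 0 := fun _ =>
    hausdorffMeasure_W_eq_zero hτ'
  refine ⟨hnull, dimH_le fun d hd => le_of_not_gt fun hlt => ?_⟩
  rw [ENNReal.ofReal_lt_coe_iff (div_pos two_pos hτ').le] at hlt
  simp [hnull d hlt] at hd
end

section
/- Let ψ : ℕ → [0,∞) and s ∈ (0,1]. If ∑_{q=1}^∞ φ(q)·(ψ(q)/q)^s converges, then the s-dimensional Hausdorff measure of W'(ψ) = {x ∈ [0,1) : |q·x − p| < ψ(q) for infinitely many coprime pairs (p,q) ∈ ℤ × ℕ} is zero. -/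
/-!
Hausdorff–Cantelli: if a countable family of sets has `∑ diam (A i) ^ s < ∞`, the points lying in
infinitely many `A i` form an `H^s`-null set, because for every finite set of indices the remaining
sets cover it, with diameters and `s`-sum of diameters tending to `0`.

For large `q` the summability forces `ψ q < q`, so for `x ∈ [0,1)` every approximation
`|q x - p| < ψ q` with `q` large has `-q ≤ p < 2q` and puts `x` in the ball of radius `ψ q / q`
about `p / q`. For each `q` at most `4 φ(q)` of these balls have coprime centres, so their `s`-sum
of diameters is at most `4 · 2^s · ∑ φ(q) (ψ(q)/q)^s < ∞`.
-/

open MeasureTheory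

/-- The Duffin–Schaeffer set `W'(ψ)` of `x ∈ [0,1)` admitting infinitely many coprime
approximations `|q·x − p| < ψ(q)`. -/
def W' (ψ : ℕ → ℝ) : Set ℝ :=
  {x : ℝ | x ∈ Set.Ico (0 : ℝ) 1 ∧
    {pq : ℤ × ℕ | 0 < pq.2 ∧ Int.gcd pq.1 (pq.2 : ℤ) = 1 ∧
      |(pq.2 : ℝ) * x - (pq.1 : ℝ)| < ψ pq.2}.Infinite}

open Filter Set Metric
open scoped ENNReal Topology Nat

theorem hausdorffMeasure_setOf_infinite_eq_zero {X ι : Type*} [EMetricSpace X]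
    [MeasurableSpace X] [BorelSpace X] [Countable ι] {d : ℝ} (hd : 0 < d) {A : ι → Set X}
    (hA : ∑' i, ediam (A i) ^ d ≠ ∞) :
    μH[d] {x | {i | x ∈ A i}.Infinite} = 0 := by
  set tail : Finset ι → ℝ≥0∞ := fun F => ∑' i : {i // i ∉ F}, ediam (A i) ^ d
  have htail : Tendsto tail atTop (𝓝 0) := ENNReal.tendsto_tsum_compl_atTop_zero hA
  have hr : Tendsto (fun F => tail F ^ d⁻¹) atTop (𝓝 0) := by
    have := ((ENNReal.continuous_rpow_const (y := d⁻¹)).tendsto 0).comp htail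
    rwa [ENNReal.zero_rpow_of_pos (inv_pos.2 hd)] at this
  have hdiam : ∀ F (i : {i // i ∉ F}), ediam (A i) ≤ tail F ^ d⁻¹ := fun F i =>
    calc ediam (A i) = (ediam (A i) ^ d) ^ d⁻¹ := by
          rw [← ENNReal.rpow_mul, mul_inv_cancel₀ hd.ne', ENNReal.rpow_one]
      _ ≤ tail F ^ d⁻¹ := by gcongr; exact ENNReal.le_tsum i
  have hcover : ∀ F : Finset ι, {x | {i | x ∈ A i}.Infinite} ⊆ ⋃ i : {i // i ∉ F}, A i :=
    fun F x hx => by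
      obtain ⟨i, hi, hiF⟩ := hx.exists_notMem_finset F
      exact mem_iUnion.2 ⟨⟨i, hiF⟩, hi⟩
  refine le_antisymm ?_ zero_le
  calc μH[d] {x | {i | x ∈ A i}.Infinite} ≤ liminf tail atTop :=
        Measure.hausdorffMeasure_le_liminf_tsum d _ _ hr (fun F (i : {i // i ∉ F}) => A i)
          (Eventually.of_forall hdiam) (Eventually.of_forall hcover)
    _ = 0 := htail.liminf_eq

theorem Int.finite_setOf_abs_sub_lt (a r : ℝ) : {p : ℤ | |a - p| < r}.Finite :=
  (tendsto_cofinite_cocompact_iff.1 Int.tendsto_coe_cofinite _ (isCompact_closedBall a r)).subset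
    fun p hp => by
      rw [mem_preimage, mem_closedBall, Real.dist_eq, abs_sub_comm]
      exact hp.le

theorem finite_setOf_snd_lt_abs_sub_lt (ψ : ℕ → ℝ) (x : ℝ) (N : ℕ) :
    {pq : ℤ × ℕ | pq.2 < N ∧ |(pq.2 : ℝ) * x - pq.1| < ψ pq.2}.Finite := by
  refine ((finite_Iio N).biUnion fun q _ =>
    (Int.finite_setOf_abs_sub_lt (q * x) (ψ q)).prod (finite_singleton q)).subset ?_
  rintro ⟨p, q⟩ ⟨hq, hp⟩
  exact mem_biUnion hq ⟨hp, rfl⟩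

noncomputable def coprimeNumerators (q : ℕ) : Finset ℤ :=
  {p ∈ Finset.Ico (-(q : ℤ)) (2 * q) | Int.gcd p q = 1}

theorem card_coprimeNumerators_le (q : ℕ) : (coprimeNumerators q).card ≤ 4 * φ q := by
  rcases Nat.eq_zero_or_pos q with rfl | hq
  · simp [coprimeNumerators]
  calc (coprimeNumerators q).card
      ≤ ({n ∈ Finset.Ico 0 (0 + 3 * q) | q.Coprime n} : Finset ℕ).card := by
        refine Finset.card_le_card_of_injOn (fun p => (p + q).toNat) ?_ ?_
        · intro p hp
          simp only [coprimeNumerators, Finset.coe_filter, Finset.mem_Ico, mem_ofPred_eq] at hp ⊢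
          refine ⟨⟨Nat.zero_le _, by omega⟩, ?_⟩
          rw [Nat.coprime_comm, Nat.Coprime, ← Int.gcd_natCast_natCast,
            Int.toNat_of_nonneg (by omega), Int.gcd_add_self_left]
          exact hp.2
        · intro p hp p' hp' h
          simp only [coprimeNumerators, Finset.coe_filter, Finset.mem_Ico, mem_ofPred_eq] at hp hp'
          simp only at h
          omega
    _ ≤ φ q * (3 * q / q + 1) := Nat.Ico_filter_coprime_le 0 (3 * q) hq.ne'
    _ = 4 * φ q := by rw [Nat.mul_div_cancel _ hq]; ring

theorem Real.ediam_ball (x r : ℝ) : ediam (ball x r) = ENNReal.ofReal (2 * r) := by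
  rw [Real.ball_eq_Ioo, Real.ediam_Ioo]
  ring_nf

noncomputable def fractionBall (ψ : ℕ → ℝ) (pq : ℤ × ℕ) : Set ℝ :=
  if pq.1 ∈ coprimeNumerators pq.2 then ball (pq.1 / pq.2) (ψ pq.2 / pq.2) else ∅

theorem mem_fractionBall_of_abs_sub_lt {ψ : ℕ → ℝ} {x : ℝ} (hx : x ∈ Ico (0 : ℝ) 1) {p : ℤ}
    {q : ℕ} (hq : 0 < q) (hpq : Int.gcd p q = 1) (hψq : ψ q < q) (happrox : |q * x - p| < ψ q) :
    x ∈ fractionBall ψ (p, q) := by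
  have hq' : (0 : ℝ) < q := Nat.cast_pos.2 hq
  have hqx₀ : 0 ≤ (q : ℝ) * x := mul_nonneg hq'.le hx.1
  have hqx₁ : (q : ℝ) * x < q := mul_lt_of_lt_one_right hq' hx.2
  obtain ⟨hlo, hhi⟩ := abs_lt.1 happrox
  have hp : p ∈ coprimeNumerators q := by
    simp only [coprimeNumerators, Finset.mem_filter, Finset.mem_Ico]
    refine ⟨⟨?_, ?_⟩, hpq⟩
    · exact_mod_cast (show (-(q : ℝ)) ≤ p by linarith)
    · exact_mod_cast (show (p : ℝ) < 2 * q by linarith)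
  simp only [fractionBall, if_pos hp, mem_ball, Real.dist_eq]
  rw [show x - p / q = (q * x - p) / q by field_simp, abs_div, abs_of_pos hq']
  gcongr

theorem W'_subset_setOf_infinite_mem_fractionBall {ψ : ℕ → ℝ}
    (hψ : ∀ᶠ q : ℕ in atTop, ψ q < q) :
    W' ψ ⊆ {x | {pq | x ∈ fractionBall ψ pq}.Infinite} := by
  rintro x ⟨hx, hinf⟩
  obtain ⟨N, hN⟩ := eventually_atTop.1 hψ
  refine (hinf.sdiff (finite_setOf_snd_lt_abs_sub_lt ψ x N)).mono ?_
  rintro ⟨p, q⟩ ⟨⟨hq, hpq, happrox⟩, hsmall⟩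
  have hNq : N ≤ q := not_lt.1 fun hqN => hsmall ⟨hqN, happrox⟩
  exact mem_fractionBall_of_abs_sub_lt hx hq hpq (hN q hNq) happrox

theorem ediam_fractionBall_rpow_le {ψ : ℕ → ℝ} (hψ : ∀ q, 0 ≤ ψ q) {s : ℝ} (hs : 0 < s)
    (pq : ℤ × ℕ) :
    ediam (fractionBall ψ pq) ^ s ≤
      if pq.1 ∈ coprimeNumerators pq.2 then ENNReal.ofReal ((2 * (ψ pq.2 / pq.2)) ^ s) else 0 := by
  unfold fractionBall
  split_ifs
  · have hr : 0 ≤ ψ pq.2 / pq.2 := div_nonneg (hψ pq.2) pq.2.cast_nonneg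
    rw [Real.ediam_ball, ENNReal.ofReal_rpow_of_nonneg (by positivity) hs.le]
  · simp [ENNReal.zero_rpow_of_pos hs]

theorem tsum_ediam_fractionBall_rpow_le {ψ : ℕ → ℝ} (hψ : ∀ q, 0 ≤ ψ q) {s : ℝ} (hs : 0 < s)
    (q : ℕ) :
    ∑' p : ℤ, ediam (fractionBall ψ (p, q)) ^ s ≤
      ENNReal.ofReal (4 * 2 ^ s * (φ q * (ψ q / q) ^ s)) := by
  have hψq : 0 ≤ ψ q / q := div_nonneg (hψ q) q.cast_nonneg
  calc ∑' p : ℤ, ediam (fractionBall ψ (p, q)) ^ s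
      ≤ ∑' p : ℤ, if p ∈ coprimeNumerators q then ENNReal.ofReal ((2 * (ψ q / q)) ^ s) else 0 :=
        ENNReal.tsum_le_tsum fun p => ediam_fractionBall_rpow_le hψ hs (p, q)
    _ = (coprimeNumerators q).card * ENNReal.ofReal ((2 * (ψ q / q)) ^ s) := by
        rw [tsum_eq_sum (s := coprimeNumerators q) (by simp +contextual), Finset.sum_ite_mem,
          Finset.inter_self, Finset.sum_const, nsmul_eq_mul]
    _ ≤ (4 * φ q : ℕ) * ENNReal.ofReal ((2 * (ψ q / q)) ^ s) := by
        gcongr; exact card_coprimeNumerators_le q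
    _ = ENNReal.ofReal (4 * 2 ^ s * (φ q * (ψ q / q) ^ s)) := by
        rw [← ENNReal.ofReal_natCast, ← ENNReal.ofReal_mul (Nat.cast_nonneg _),
          Real.mul_rpow zero_le_two hψq]
        push_cast
        ring_nf

theorem tsum_ediam_fractionBall_rpow_ne_top {ψ : ℕ → ℝ} (hψ : ∀ q, 0 ≤ ψ q) {s : ℝ} (hs : 0 < s)
    (hsum : Summable fun q : ℕ => (φ q : ℝ) * (ψ q / q) ^ s) :
    ∑' pq : ℤ × ℕ, ediam (fractionBall ψ pq) ^ s ≠ ∞ := by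
  have hnonneg : ∀ q : ℕ, 0 ≤ 4 * 2 ^ s * ((φ q : ℝ) * (ψ q / q) ^ s) := fun q => by
    have := div_nonneg (hψ q) q.cast_nonneg; positivity
  rw [← lt_top_iff_ne_top]
  calc ∑' pq : ℤ × ℕ, ediam (fractionBall ψ pq) ^ s
      = ∑' (q : ℕ) (p : ℤ), ediam (fractionBall ψ (p, q)) ^ s := by
        rw [ENNReal.tsum_prod', ENNReal.tsum_comm]
    _ ≤ ∑' q : ℕ, ENNReal.ofReal (4 * 2 ^ s * (φ q * (ψ q / q) ^ s)) :=
        ENNReal.tsum_le_tsum (tsum_ediam_fractionBall_rpow_le hψ hs)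
    _ = ENNReal.ofReal (∑' q : ℕ, 4 * 2 ^ s * (φ q * (ψ q / q) ^ s)) :=
        (ENNReal.ofReal_tsum_of_nonneg hnonneg (hsum.mul_left _)).symm
    _ < ∞ := ENNReal.ofReal_lt_top

theorem eventually_lt_self_of_summable_totient_mul_rpow {ψ : ℕ → ℝ} {s : ℝ} (hs : 0 < s)
    (hsum : Summable fun q : ℕ => (φ q : ℝ) * (ψ q / q) ^ s) :
    ∀ᶠ q : ℕ in atTop, ψ q < q := by
  filter_upwards [hsum.tendsto_atTop_zero.eventually_lt_const one_pos, eventually_gt_atTop 0]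
    with q hlt hq
  by_contra! hle
  have hφ : (1 : ℝ) ≤ φ q := by exact_mod_cast Nat.totient_pos.2 hq
  have hratio : 1 ≤ ψ q / q := (one_le_div (Nat.cast_pos.2 hq)).2 hle
  exact hlt.not_ge (one_le_mul_of_one_le_of_one_le hφ (Real.one_le_rpow hratio hs.le))

theorem duffin_schaeffer_convergence_general (ψ : ℕ → ℝ) (hψ : ∀ q, 0 ≤ ψ q)
    (s : ℝ) (hs0 : 0 < s)
    (hsum : Summable fun q : ℕ => (Nat.totient q : ℝ) * (ψ q / q) ^ s) :
    μH[s] (W' ψ) = 0 :=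
  measure_mono_null
    (W'_subset_setOf_infinite_mem_fractionBall
      (eventually_lt_self_of_summable_totient_mul_rpow hs0 hsum))
    (hausdorffMeasure_setOf_infinite_eq_zero hs0
      (tsum_ediam_fractionBall_rpow_ne_top hψ hs0 hsum))

/-- Convergence half of the Duffin–Schaeffer conjecture for Hausdorff measures:
if `∑ φ(q) (ψ(q)/q)^s < ∞` then `H^s(W'(ψ)) = 0`. -/
theorem duffin_schaeffer_convergence (ψ : ℕ → ℝ) (hψ : ∀ q, 0 ≤ ψ q)
    (s : ℝ) (hs0 : 0 < s) (hs1 : s ≤ 1)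
    (hsum : Summable fun q : ℕ => (Nat.totient q : ℝ) * (ψ q / q) ^ s) :
    μH[s] (W' ψ) = 0 :=
  duffin_schaeffer_convergence_general ψ hψ s hs0 hsum
end

section
/- Let n, m ≥ 1 with nm > 1, ψ : ℕ → [0,∞), and s ∈ (m(n−1), nm]. If ∑_{q=1}^∞ q^{m+n−1}·(ψ(q)/q)^{s−m(n−1)} converges, then the s-dimensional Hausdorff measure of W_{n,m}(ψ) = {X ∈ [0,1)^{n×m} : ‖qX‖ < ψ(|q|) for infinitely many q ∈ ℤⁿ \ {0}} is zero. -/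
/-!
`W_{n,m}(ψ)` lies in the limsup of the resonant sets
`E_Q = {X : ‖qX‖ < ψ(Q) for some q with |q| = Q}`, so by the Hausdorff–Cantelli lemma it
suffices to cover each `E_Q` by sets the `s`-th powers of whose diameters sum to
`≪ Q^{m+n-1} ρ^{s-m(n-1)}`, where `ρ = ψ(Q)/Q`. Fix `q` and a coordinate `i₀` with
`|q_{i₀}| = Q`. In each column of `X`, put the entries off row `i₀` on a grid of mesh `ρ` and let
`p` be the integer nearest to the column's product with `q`: the entry in row `i₀` is then
determined up to `nρ`. There are `≪ Q^{n-1}` such `q` and `≪ Q ρ^{1-n}` choices of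
`(p, grid cell)` per column, giving `≪ Q^{n-1} (Q ρ^{1-n})^m` sup-norm balls of radius `nρ`.
-/

open MeasureTheory Filter Metric Finset
open scoped ENNReal Topology

theorem hausdorffMeasure_limsup_cofinite_eq_zero {X ι : Type*} [EMetricSpace X]
    [MeasurableSpace X] [BorelSpace X] [Countable ι] {d : ℝ} (hd : 0 < d) {s : ι → Set X}
    (hs : ∑' i, ediam (s i) ^ d ≠ ∞) : μH[d] (limsup s cofinite) = 0 := by
  set tail : Finset ι → ℝ≥0∞ := fun F => ∑' i : {i // i ∉ F}, ediam (s i) ^ d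
  have htail : Tendsto tail atTop (𝓝 0) := ENNReal.tendsto_tsum_compl_atTop_zero hs
  refine le_antisymm ?_ zero_le
  calc μH[d] (limsup s cofinite) ≤ liminf tail atTop := by
        refine Measure.hausdorffMeasure_le_liminf_tsum d _ (fun F => tail F ^ d⁻¹) ?_
          (fun F (i : {i // i ∉ F}) => s i) (.of_forall fun F i => ?_) (.of_forall fun F => ?_)
        · have := ((ENNReal.continuous_rpow_const (y := d⁻¹)).tendsto 0).comp htail
          rwa [ENNReal.zero_rpow_of_pos (inv_pos.2 hd)] at this
        · exact (ENNReal.le_rpow_inv_iff hd).2 (ENNReal.le_tsum i)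
        · rw [hasBasis_cofinite.limsup_eq_iInf_iSup, Set.iUnion_subtype]
          exact Set.iInter₂_subset _ F.finite_toSet
    _ = 0 := htail.liminf_eq

theorem card_piFinset_update_const {ι α : Type*} [Fintype ι] [DecidableEq ι] [DecidableEq α]
    (A B : Finset α) (i₀ : ι) :
    #(Fintype.piFinset (Function.update (fun _ => A) i₀ B)) = #B * #A ^ (Fintype.card ι - 1) := by
  rw [Fintype.card_piFinset]
  simp only [Function.apply_update (fun _ => Finset.card)]
  rw [prod_update_of_mem (mem_univ i₀), prod_const, card_sdiff, card_univ]
  simp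

theorem abs_sub_mul_floor_div_le {x ρ : ℝ} (hx : 0 ≤ x) (hρ : 0 < ρ) : |x - ρ * ⌊x / ρ⌋₊| ≤ ρ := by
  have h₁ := Nat.floor_le (div_nonneg hx hρ.le)
  have h₂ := Nat.lt_floor_add_one (x / ρ)
  rw [le_div_iff₀ hρ] at h₁
  rw [div_lt_iff₀ hρ] at h₂
  rw [abs_le]
  constructor <;> nlinarith

noncomputable def hyperplanePoint {ι : Type*} [Fintype ι] [DecidableEq ι] (q : ι → ℝ) (i₀ : ι)
    (p : ℝ) (y : ι → ℝ) : ι → ℝ :=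
  Function.update y i₀ ((p - ∑ i ∈ univ.erase i₀, q i * y i) / q i₀)

section hyperplanePoint

variable {ι : Type*} [Fintype ι] [DecidableEq ι] {q x y : ι → ℝ} {i₀ : ι} {p ρ : ℝ}

theorem sum_mul_hyperplanePoint (hq : q i₀ ≠ 0) : ∑ i, q i * hyperplanePoint q i₀ p y i = p := by
  have hoff : ∀ i ∈ univ.erase i₀, q i * hyperplanePoint q i₀ p y i = q i * y i := fun i hi => by
    rw [hyperplanePoint, Function.update_of_ne (ne_of_mem_erase hi)]
  rw [← add_sum_erase _ _ (mem_univ i₀), sum_congr rfl hoff, hyperplanePoint, Function.update_self,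
    mul_div_cancel₀ _ hq]
  ring

theorem abs_sub_hyperplanePoint_le (hq₀ : q i₀ ≠ 0) (hq : ∀ i, |q i| ≤ |q i₀|)
    (hy : ∀ i ≠ i₀, |x i - y i| ≤ ρ) (hp : |∑ i, q i * x i - p| ≤ |q i₀| * ρ) (i : ι) :
    |x i - hyperplanePoint q i₀ p y i| ≤ Fintype.card ι * ρ := by
  have hc := sum_mul_hyperplanePoint (p := p) (y := y) hq₀
  have hoff : ∀ i ≠ i₀, x i - hyperplanePoint q i₀ p y i = x i - y i := fun i hi => by
    rw [hyperplanePoint, Function.update_of_ne hi]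
  set c := hyperplanePoint q i₀ p y
  have hq₀pos : 0 < |q i₀| := abs_pos.2 hq₀
  have hρ : 0 ≤ ρ := nonneg_of_mul_nonneg_right ((abs_nonneg _).trans hp) hq₀pos
  have hcard : (1 : ℝ) ≤ Fintype.card ι := by
    exact_mod_cast Fintype.card_pos_iff.2 ⟨i₀⟩
  rcases eq_or_ne i i₀ with rfl | hi
  · have hsplit : q i * (x i - c i) =
        (∑ j, q j * x j - p) - ∑ j ∈ univ.erase i, q j * (x j - y j) := by
      have htot : ∑ j, q j * (x j - c j) = ∑ j, q j * x j - p := by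
        simp only [mul_sub, sum_sub_distrib, hc]
      rw [← add_sum_erase _ _ (mem_univ i),
        sum_congr rfl fun j hj => by rw [hoff j (ne_of_mem_erase hj)]] at htot
      linarith
    have hrest : |∑ j ∈ univ.erase i, q j * (x j - y j)| ≤ (Fintype.card ι - 1) * (|q i| * ρ) := by
      calc _ ≤ ∑ j ∈ univ.erase i, |q j| * |x j - y j| :=
            (abs_sum_le_sum_abs _ _).trans_eq (by simp only [abs_mul])
        _ ≤ ∑ j ∈ univ.erase i, |q i| * ρ :=
            sum_le_sum fun j hj => mul_le_mul (hq j) (hy j (ne_of_mem_erase hj))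
              (abs_nonneg _) (abs_nonneg _)
        _ = _ := by
            rw [sum_const, card_erase_of_mem (mem_univ i), card_univ, nsmul_eq_mul,
              Nat.cast_sub (Nat.one_le_cast.1 hcard)]
            simp
    have : |q i| * |x i - c i| ≤ |q i| * (Fintype.card ι * ρ) := by
      rw [← abs_mul, hsplit]
      calc _ ≤ _ := abs_sub _ _
        _ ≤ _ := add_le_add hp hrest
        _ = _ := by ring
    exact le_of_mul_le_mul_left this hq₀pos
  · rw [hoff i hi]
    exact (hy i hi).trans (le_mul_of_one_le_left hρ hcard)

end hyperplanePoint

section Cover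

variable {n m : ℕ}

/-- A ball of the cover is labelled by `i₀`, `q` and, for each column `j`, a pair `D j = (p, k)`:
column `j` of its centre is the point of the hyperplane `∑ i, q i * c i = p` lying over the grid
point `ρ • k` (the entry `k i₀` is ignored, and set to `0` by `coverParam`). -/
noncomputable def coverCenter (q : Fin n → ℤ) (i₀ : Fin n) (ρ : ℝ)
    (D : Fin m → ℤ × (Fin n → ℕ)) : Fin n → Fin m → ℝ :=
  fun i j => hyperplanePoint (fun i => (q i : ℝ)) i₀ (D j).1 (fun i => ρ * (D j).2 i) i

noncomputable def coverParam (q : Fin n → ℤ) (i₀ : Fin n) (ρ : ℝ) (X : Fin n → Fin m → ℝ) :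
    Fin m → ℤ × (Fin n → ℕ) :=
  fun j => (round (∑ i, (q i : ℝ) * X i j), Function.update (fun i => ⌊X i j / ρ⌋₊) i₀ 0)

noncomputable def boxFaces (n Q : ℕ) (i₀ : Fin n) : Finset (Fin n → ℤ) :=
  Fintype.piFinset (Function.update (fun _ => Icc (-(Q : ℤ)) Q) i₀ {(Q : ℤ), -(Q : ℤ)})

noncomputable def gridParams (n m Q : ℕ) (ρ : ℝ) (i₀ : Fin n) :
    Finset (Fin m → ℤ × (Fin n → ℕ)) :=
  Fintype.piFinset fun _ => Icc (-(n * Q + 1 : ℤ)) (n * Q + 1) ×ˢ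
    Fintype.piFinset (Function.update (fun _ => range (⌊ρ⁻¹⌋₊ + 1)) i₀ {0})

noncomputable def coverIndex (n m Q : ℕ) (ρ : ℝ) :
    Finset (Σ _ : Fin n, (Fin n → ℤ) × (Fin m → ℤ × (Fin n → ℕ))) :=
  univ.sigma fun i₀ => boxFaces n Q i₀ ×ˢ gridParams n m Q ρ i₀

noncomputable def coverBall (ρ : ℝ) (z : Σ _ : Fin n, (Fin n → ℤ) × (Fin m → ℤ × (Fin n → ℕ))) :
    Set (Fin n → Fin m → ℝ) :=
  closedBall (coverCenter z.2.1 z.1 ρ z.2.2) (n * ρ)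

theorem mem_boxFaces {Q : ℕ} {i₀ : Fin n} {q : Fin n → ℤ} (h₀ : (q i₀).natAbs = Q)
    (h : ∀ i, (q i).natAbs ≤ Q) : q ∈ boxFaces n Q i₀ := by
  refine Fintype.mem_piFinset.2 fun i => ?_
  rcases eq_or_ne i i₀ with rfl | hi
  · rw [Function.update_self, mem_insert, mem_singleton]
    omega
  · rw [Function.update_of_ne hi, mem_Icc]
    have := h i
    omega

theorem abs_sum_mul_le {Q : ℕ} {q : Fin n → ℤ} (hq : ∀ i, (q i).natAbs ≤ Q) {x : Fin n → ℝ}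
    (hx : ∀ i, x i ∈ Set.Ico (0 : ℝ) 1) : |∑ i, (q i : ℝ) * x i| ≤ n * Q := by
  calc _ ≤ ∑ i, |(q i : ℝ)| * |x i| := (abs_sum_le_sum_abs _ _).trans_eq (by simp only [abs_mul])
    _ ≤ ∑ _i : Fin n, (Q : ℝ) * 1 := sum_le_sum fun i _ => by
        refine mul_le_mul ?_ ?_ (abs_nonneg _) (Nat.cast_nonneg Q)
        · rw [← Int.cast_abs, ← Nat.cast_natAbs]
          exact_mod_cast hq i
        · rw [abs_of_nonneg (hx i).1]
          exact (hx i).2.le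
    _ = n * Q := by simp

theorem coverParam_mem_gridParams {Q : ℕ} {ρ : ℝ} (hρ : 0 < ρ) {q : Fin n → ℤ}
    (hq : ∀ i, (q i).natAbs ≤ Q) (i₀ : Fin n) {X : Fin n → Fin m → ℝ}
    (hX : ∀ i j, X i j ∈ Set.Ico (0 : ℝ) 1) : coverParam q i₀ ρ X ∈ gridParams n m Q ρ i₀ := by
  refine Fintype.mem_piFinset.2 fun j => mem_product.2 ⟨?_, Fintype.mem_piFinset.2 fun i => ?_⟩
  · have hy := abs_sum_mul_le hq fun i => hX i j
    have hr := abs_sub_abs_le_abs_sub (round (∑ i, (q i : ℝ) * X i j) : ℝ) (∑ i, (q i : ℝ) * X i j)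
    rw [abs_sub_comm] at hr
    have : |(round (∑ i, (q i : ℝ) * X i j) : ℝ)| ≤ n * Q + 1 := by
      linarith [abs_sub_round (∑ i, (q i : ℝ) * X i j)]
    exact mem_Icc.2 (abs_le.1 (by exact_mod_cast this))
  · rcases eq_or_ne i i₀ with rfl | hi
    · simp [coverParam]
    · simp only [coverParam, Function.update_of_ne hi, mem_range, Nat.lt_succ_iff]
      refine Nat.floor_mono ?_
      rw [div_eq_mul_inv]
      exact mul_le_of_le_one_left (inv_nonneg.2 hρ.le) (hX i j).2.le

theorem mem_closedBall_coverCenter {ρ : ℝ} (hρ : 0 < ρ) {q : Fin n → ℤ} {i₀ : Fin n}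
    (hq₀ : q i₀ ≠ 0) (hq : ∀ i, (q i).natAbs ≤ (q i₀).natAbs) {X : Fin n → Fin m → ℝ}
    (hX : ∀ i j, X i j ∈ Set.Ico (0 : ℝ) 1)
    (hqX : ∀ j, distNearestInt (∑ i, (q i : ℝ) * X i j) ≤ (q i₀).natAbs * ρ) :
    X ∈ closedBall (coverCenter q i₀ ρ (coverParam q i₀ ρ X)) (n * ρ) := by
  have habs : ∀ i, |(q i : ℝ)| = (q i).natAbs := fun i => by rw [Nat.cast_natAbs, Int.cast_abs]
  rw [mem_closedBall, dist_pi_le_iff (by positivity)]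
  intro i
  rw [dist_pi_le_iff (by positivity)]
  intro j
  have := abs_sub_hyperplanePoint_le (q := fun i => (q i : ℝ)) (x := fun i => X i j)
    (y := fun i => ρ * (coverParam q i₀ ρ X j).2 i) (p := (coverParam q i₀ ρ X j).1)
    (Int.cast_ne_zero.2 hq₀) (fun i => by simp only [habs]; exact_mod_cast hq i)
    (fun i hi => by
      simpa [coverParam, Function.update_of_ne hi] using abs_sub_mul_floor_div_le (hX i j).1 hρ)
    (by rw [habs]; exact hqX j) i
  rwa [Fintype.card_fin, ← Real.dist_eq] at this

theorem exists_mem_coverIndex {Q : ℕ} {ρ : ℝ} (hρ : 0 < ρ) {q : Fin n → ℤ} (hq₀ : q ≠ 0)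
    (hQ : univ.sup (fun i => (q i).natAbs) = Q) {X : Fin n → Fin m → ℝ}
    (hX : ∀ i j, X i j ∈ Set.Ico (0 : ℝ) 1)
    (hqX : ∀ j, distNearestInt (∑ i, (q i : ℝ) * X i j) ≤ Q * ρ) :
    ∃ z ∈ coverIndex n m Q ρ, X ∈ coverBall ρ z := by
  obtain ⟨i₁, hi₁⟩ := Function.ne_iff.1 hq₀
  obtain ⟨i₀, -, hi₀⟩ := exists_mem_eq_sup univ ⟨i₁, mem_univ _⟩ fun i => (q i).natAbs
  have hqQ : ∀ i, (q i).natAbs ≤ Q := fun i => hQ ▸ le_sup (f := fun i => (q i).natAbs) (mem_univ i)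
  have hqi₀ : (q i₀).natAbs = Q := hi₀.symm.trans hQ
  have hqi₀_ne : q i₀ ≠ 0 := Int.natAbs_ne_zero.1 <| by
    have := Int.natAbs_pos.2 hi₁
    linarith [hqQ i₁]
  refine ⟨⟨i₀, q, coverParam q i₀ ρ X⟩, mem_sigma.2 ⟨mem_univ _, mem_product.2
    ⟨mem_boxFaces hqi₀ hqQ, coverParam_mem_gridParams hρ hqQ i₀ hX⟩⟩, ?_⟩
  exact mem_closedBall_coverCenter hρ hqi₀_ne (hqi₀ ▸ hqQ) hX (hqi₀ ▸ hqX)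

theorem card_boxFaces_le (Q : ℕ) (i₀ : Fin n) : #(boxFaces n Q i₀) ≤ 2 * (2 * Q + 1) ^ (n - 1) := by
  rw [boxFaces, card_piFinset_update_const, Fintype.card_fin, Int.card_Icc]
  gcongr
  · exact card_le_two
  · omega

theorem card_gridParams (Q : ℕ) (ρ : ℝ) (i₀ : Fin n) :
    #(gridParams n m Q ρ i₀) = ((2 * n * Q + 3) * (⌊ρ⁻¹⌋₊ + 1) ^ (n - 1)) ^ m := by
  rw [gridParams, Fintype.card_piFinset, prod_const, card_univ, Fintype.card_fin, card_product,
    card_piFinset_update_const, Fintype.card_fin, Int.card_Icc, card_singleton, card_range]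
  rw [one_mul, show (n * Q + 1 + 1 - -(n * Q + 1) : ℤ) = ((2 * n * Q + 3 : ℕ) : ℤ) by
    push_cast; ring, Int.toNat_natCast]

theorem card_coverIndex_le (Q : ℕ) (ρ : ℝ) : #(coverIndex n m Q ρ) ≤
    n * (2 * (2 * Q + 1) ^ (n - 1) * ((2 * n * Q + 3) * (⌊ρ⁻¹⌋₊ + 1) ^ (n - 1)) ^ m) := by
  rw [coverIndex, card_sigma]
  calc _ ≤ ∑ _i₀ : Fin n,
        2 * (2 * Q + 1) ^ (n - 1) * ((2 * n * Q + 3) * (⌊ρ⁻¹⌋₊ + 1) ^ (n - 1)) ^ m :=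
        sum_le_sum fun i₀ _ => by
          rw [card_product, card_gridParams]
          gcongr
          exact card_boxFaces_le Q i₀
    _ = _ := by simp

noncomputable def coverConst (n m : ℕ) : ℝ := 2 * n * 3 ^ (n - 1) * ((2 * n + 3) * 2 ^ (n - 1)) ^ m

theorem card_coverIndex_mul_pow_le {Q : ℕ} (hQ : 1 ≤ Q) {ρ : ℝ} (hρ : 0 < ρ) (hρ₁ : ρ ≤ 1) :
    (#(coverIndex n m Q ρ) : ℝ) * ρ ^ (m * (n - 1)) ≤ coverConst n m * (Q ^ (n - 1) * Q ^ m) := by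
  have hQ' : (1 : ℝ) ≤ Q := by exact_mod_cast hQ
  have hgrid : (⌊ρ⁻¹⌋₊ + 1 : ℝ) * ρ ≤ 2 := by
    have := Nat.floor_le (inv_nonneg.2 hρ.le)
    calc _ ≤ (ρ⁻¹ + 1) * ρ := by gcongr
      _ = 1 + ρ := by field_simp
      _ ≤ 2 := by linarith
  calc (#(coverIndex n m Q ρ) : ℝ) * ρ ^ (m * (n - 1))
      ≤ n * (2 * (2 * Q + 1) ^ (n - 1) * ((2 * n * Q + 3) * (⌊ρ⁻¹⌋₊ + 1) ^ (n - 1)) ^ m) *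
          ρ ^ (m * (n - 1)) := by
        gcongr
        exact_mod_cast card_coverIndex_le Q ρ
    _ = 2 * n * (2 * Q + 1) ^ (n - 1) * ((2 * n * Q + 3) * ((⌊ρ⁻¹⌋₊ + 1) * ρ) ^ (n - 1)) ^ m := by
        rw [mul_comm m, pow_mul, mul_pow _ ρ]
        generalize (2 * Q + 1 : ℝ) = b
        generalize (2 * n * Q + 3 : ℝ) = a
        generalize (⌊ρ⁻¹⌋₊ + 1 : ℝ) = F
        ring
    _ ≤ 2 * n * (3 * Q) ^ (n - 1) * ((2 * n + 3) * Q * 2 ^ (n - 1)) ^ m := by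
        gcongr <;> nlinarith
    _ = _ := by rw [coverConst, mul_pow 3, mul_right_comm _ (Q : ℝ), mul_pow _ (Q : ℝ)]; ring

theorem card_coverIndex_mul_rpow_le (hn : 1 ≤ n) {s : ℝ} (hs : (m : ℝ) * ((n : ℝ) - 1) < s)
    {Q : ℕ} (hQ : 1 ≤ Q) {ρ r : ℝ} (hρ : 0 < ρ) (hρ₁ : ρ ≤ 1) (hρr : ρ ≤ r) :
    #(coverIndex n m Q ρ) * (2 * n * ρ) ^ s ≤
      (2 * n) ^ s * (coverConst n m * (Q ^ (m + n - 1) * r ^ (s - m * ((n : ℝ) - 1)))) := by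
  have hsplit : (2 * n * ρ) ^ s =
      (2 * n) ^ s * (ρ ^ (m * (n - 1)) * ρ ^ (s - m * ((n : ℝ) - 1))) := by
    rw [Real.mul_rpow (by positivity) hρ.le, ← Real.rpow_natCast, ← Real.rpow_add hρ]
    push_cast [hn]
    ring_nf
  calc _ = (2 * n) ^ s * ((#(coverIndex n m Q ρ) * ρ ^ (m * (n - 1))) *
        ρ ^ (s - m * ((n : ℝ) - 1))) := by rw [hsplit]; ring
    _ ≤ (2 * n) ^ s * ((coverConst n m * (Q ^ (n - 1) * Q ^ m)) *
        r ^ (s - m * ((n : ℝ) - 1))) := by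
      refine mul_le_mul_of_nonneg_left (mul_le_mul_of_nonneg (card_coverIndex_mul_pow_le hQ hρ hρ₁)
        (Real.rpow_le_rpow hρ.le hρr (sub_nonneg.2 hs.le)) (by positivity)
        (Real.rpow_nonneg (hρ.le.trans hρr) _)) (by positivity)
    _ = _ := by rw [← pow_add, show n - 1 + m = m + n - 1 by omega]; ring

end Cover

/-- Capping at `1` costs nothing, since `distNearestInt ≤ 1 / 2 < Q`, and keeps the grids of
`gridParams` of size `≪ ρ⁻¹`. -/
noncomputable def coverRadius (ψ : ℕ → ℝ) (Q : ℕ) : ℝ := min (ψ Q / Q) 1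

section Resonant

variable {n m : ℕ} {ψ : ℕ → ℝ}

theorem finite_setOf_sup_natAbs_eq (Q : ℕ) :
    {q : Fin n → ℤ | univ.sup (fun i => (q i).natAbs) = Q}.Finite := by
  refine (Fintype.piFinset fun _ => Icc (-(Q : ℤ)) Q).finite_toSet.subset fun q hq => ?_
  refine Fintype.mem_piFinset.2 fun i => mem_Icc.2 ?_
  have := hq ▸ le_sup (f := fun i => (q i).natAbs) (mem_univ i)
  omega

theorem exists_mem_coverBall_coverRadius (hm : 1 ≤ m) {q : Fin n → ℤ} (hq₀ : q ≠ 0)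
    {X : Fin n → Fin m → ℝ} (hX : ∀ i j, X i j ∈ Set.Ico (0 : ℝ) 1)
    (hqX : ∀ j, distNearestInt (∑ i, (q i : ℝ) * X i j) < ψ (univ.sup fun i => (q i).natAbs)) :
    ∃ z ∈ coverIndex n m (univ.sup fun i => (q i).natAbs)
      (coverRadius ψ (univ.sup fun i => (q i).natAbs)),
      X ∈ coverBall (coverRadius ψ (univ.sup fun i => (q i).natAbs)) z := by
  set Q := univ.sup fun i => (q i).natAbs
  have hQ : 1 ≤ Q := by
    obtain ⟨i, hi⟩ := Function.ne_iff.1 hq₀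
    exact (Int.natAbs_pos.2 hi).trans_le (le_sup (f := fun i => (q i).natAbs) (mem_univ i))
  have hQ' : (0 : ℝ) < Q := by exact_mod_cast hQ
  have hψ : 0 < ψ Q := (abs_nonneg _).trans_lt (hqX ⟨0, hm⟩)
  refine exists_mem_coverIndex (lt_min (div_pos hψ hQ') one_pos) hq₀ rfl hX fun j => ?_
  rcases min_choice (ψ Q / Q) 1 with h | h <;> rw [h]
  · rw [mul_div_cancel₀ _ hQ'.ne']
    exact (hqX j).le
  · have : (1 : ℝ) ≤ Q := by exact_mod_cast hQ
    have := abs_sub_round (∑ i, (q i : ℝ) * X i j)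
    rw [distNearestInt]
    linarith

theorem subset_limsup_coverBall (hm : 1 ≤ m) :
    {X : Fin n → Fin m → ℝ | (∀ i j, X i j ∈ Set.Ico (0 : ℝ) 1) ∧
        {q : Fin n → ℤ | q ≠ 0 ∧ ∀ j : Fin m,
          distNearestInt (∑ i : Fin n, (q i : ℝ) * X i j) <
            ψ (Finset.univ.sup fun i => (q i).natAbs)}.Infinite} ⊆
      limsup (fun z : Σ Q : ℕ, coverIndex n m Q (coverRadius ψ Q) =>
        coverBall (coverRadius ψ z.1) z.2.1) cofinite := by
  rintro X ⟨hX, hinf⟩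
  rw [mem_limsup_iff_frequently_mem, frequently_cofinite_iff_infinite]
  intro hfin
  refine hinf (((hfin.image Sigma.fst).preimage' fun Q _ => finite_setOf_sup_natAbs_eq Q).subset ?_)
  rintro q ⟨hq₀, hqX⟩
  obtain ⟨z, hz, hXz⟩ := exists_mem_coverBall_coverRadius hm hq₀ hX hqX
  exact ⟨⟨_, z, hz⟩, hXz, rfl⟩

theorem exists_sum_ediam_coverBall_rpow_le (hn : 1 ≤ n) (hψ : ∀ q, 0 ≤ ψ q) {s : ℝ}
    (hs : (m : ℝ) * ((n : ℝ) - 1) < s) : ∃ C, ∀ Q,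
      ∑ z ∈ coverIndex n m Q (coverRadius ψ Q), ediam (coverBall (coverRadius ψ Q) z) ^ s ≤
        ENNReal.ofReal (C * ((Q : ℝ) ^ (m + n - 1) * (ψ Q / Q) ^ (s - m * ((n : ℝ) - 1)))) := by
  have hs₀ : 0 < s :=
    (mul_nonneg (Nat.cast_nonneg m) (sub_nonneg.2 (Nat.one_le_cast.2 hn))).trans_lt hs
  refine ⟨(2 * n) ^ s * coverConst n m, fun Q => ?_⟩
  set ρ := coverRadius ψ Q
  have hρ₀ : 0 ≤ ρ := le_min (div_nonneg (hψ Q) (Nat.cast_nonneg Q)) zero_le_one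
  have hdiam : ∀ z ∈ coverIndex n m Q ρ, ediam (coverBall ρ z) ^ s ≤
      ENNReal.ofReal ((2 * n * ρ) ^ s) := fun z _ => by
    rw [coverBall, ← closedEBall_ofReal (by positivity),
      ← ENNReal.ofReal_rpow_of_nonneg (by positivity) hs₀.le, mul_assoc,
      ENNReal.ofReal_mul zero_le_two, ENNReal.ofReal_ofNat]
    gcongr
    exact ediam_closedEBall_le
  refine (sum_le_card_nsmul _ _ _ hdiam).trans ?_
  -- `ρ = 0` includes `Q = 0`, where `ψ Q / Q = 0`
  rcases hρ₀.eq_or_lt with hρ | hρ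
  · simp [← hρ, Real.zero_rpow hs₀.ne']
  have hQ : 1 ≤ Q := by
    refine Nat.one_le_iff_ne_zero.2 fun hQ => hρ.ne' ?_
    simp [ρ, coverRadius, hQ]
  rw [nsmul_eq_mul, ← ENNReal.ofReal_natCast, ← ENNReal.ofReal_mul (Nat.cast_nonneg _)]
  exact ENNReal.ofReal_le_ofReal <|
    (card_coverIndex_mul_rpow_le hn hs hQ hρ (min_le_right _ _) (min_le_left _ _)).trans_eq
      (mul_assoc _ _ _).symm

end Resonant

theorem khintchine_groshev_convergence_general (n m : ℕ) (hn : 1 ≤ n) (hm : 1 ≤ m)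
    (ψ : ℕ → ℝ) (hψ : ∀ q, 0 ≤ ψ q) (s : ℝ)
    (hs1 : (m : ℝ) * ((n : ℝ) - 1) < s)
    (hsum : Summable fun q : ℕ =>
      (q : ℝ) ^ (m + n - 1) * (ψ q / q) ^ (s - m * ((n : ℝ) - 1))) :
    μH[s] {X : Fin n → Fin m → ℝ | (∀ i j, X i j ∈ Set.Ico (0 : ℝ) 1) ∧
        {q : Fin n → ℤ | q ≠ 0 ∧ ∀ j : Fin m,
          distNearestInt (∑ i : Fin n, (q i : ℝ) * X i j) <
            ψ (Finset.univ.sup fun i => (q i).natAbs)}.Infinite} = 0 := by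
  have hs : 0 < s :=
    (mul_nonneg (Nat.cast_nonneg m) (sub_nonneg.2 (Nat.one_le_cast.2 hn))).trans_lt hs1
  obtain ⟨C, hC⟩ := exists_sum_ediam_coverBall_rpow_le hn hψ hs1
  refine measure_mono_null (subset_limsup_coverBall hm)
    (hausdorffMeasure_limsup_cofinite_eq_zero hs ?_)
  rw [ENNReal.tsum_sigma']
  refine ne_top_of_le_ne_top ?_
    (ENNReal.tsum_le_tsum fun Q => (Finset.tsum_subtype _ _).trans_le (hC Q))
  exact ENNReal.tsum_coe_ne_top_iff_summable.2 (hsum.mul_left C).toNNReal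

/-- Convergence half of the Khintchine–Groshev theorem for Hausdorff measures: for
`nm > 1` and `s ∈ (m(n−1), nm]`, if `∑ q^{m+n−1} (ψ(q)/q)^{s−m(n−1)} < ∞` then
`H^s(W_{n,m}(ψ)) = 0`. -/
theorem khintchine_groshev_convergence (n m : ℕ) (hn : 1 ≤ n) (hm : 1 ≤ m)
    (hnm : 1 < n * m) (ψ : ℕ → ℝ) (hψ : ∀ q, 0 ≤ ψ q) (s : ℝ)
    (hs1 : (m : ℝ) * ((n : ℝ) - 1) < s) (hs2 : s ≤ (n : ℝ) * m)
    (hsum : Summable fun q : ℕ =>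
      (q : ℝ) ^ (m + n - 1) * (ψ q / q) ^ (s - m * ((n : ℝ) - 1))) :
    μH[s] {X : Fin n → Fin m → ℝ | (∀ i j, X i j ∈ Set.Ico (0 : ℝ) 1) ∧
        {q : Fin n → ℤ | q ≠ 0 ∧ ∀ j : Fin m,
          distNearestInt (∑ i : Fin n, (q i : ℝ) * X i j) <
            ψ (Finset.univ.sup fun i => (q i).natAbs)}.Infinite} = 0 :=
  khintchine_groshev_convergence_general n m hn hm ψ hψ s hs1 hsum
end
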